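/- arXiv:2207.04666 — 2 statements merged into one kernel-verified Lean document; each statement's English description precedes it below -/
import Mathlib

section
/- Let P be a digital net in prime power base b. For any u ⊆ {1,…,s} and k ∈ ℕ₀^{|u|}, we have |A(u, k+1_u) ∩ P^⊥| = |V(u,k) ∩ P^⊥| · |Q(u, k+1_u, P)|, where Q(u,k+1_u,P) is the intersection of the image of the projection of V(u,k+1_u) ∩ P^⊥ onto the leading digits with (F_b∖{0})^{|u|}. -/
open Finset

noncomputable section

/-- the `i`-th `b`-adic digit of a natural number `k`. -/
def ndigit (b k i : ℕ) : ℕ := k / b ^ i % b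

/-- the `(i+1)`-st `b`-adic digit of a real number `x ∈ [0,1)`
(the unique expansion with infinitely many digits `≠ b-1`). -/
def rdigit (b : ℕ) (x : ℝ) (i : ℕ) : ℕ := (⌊(b : ℝ) ^ (i + 1) * x⌋).toNat % b

/-- the primitive `b`-th root of unity `ω_b = exp(2πi/b)`. -/
def omg (b : ℕ) : ℂ := Complex.exp (2 * Real.pi * Complex.I / b)

/-- embed a digit (element of `Z_b`) into the finite field `F` via the bijection `φ`. -/
def toF {F : Type} [Field F] [Fintype F] (φ : Fin (Fintype.card F) ≃ F) (a : ℕ) : F :=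
  φ ⟨a % Fintype.card F, Nat.mod_lt a Fintype.card_pos⟩

/-- map a field element back to a digit in `Z_b` via `φ⁻¹`. -/
def fromF {F : Type} [Field F] [Fintype F] (φ : Fin (Fintype.card F) ≃ F) (a : F) : ℕ :=
  (φ.symm a : ℕ)

/-- the `k`-th `b`-adic Walsh function, `b = |F|`,
`wal_k(x) = ω_b^{φ⁻¹(φ(κ₀)φ(ξ₁)) + φ⁻¹(φ(κ₁)φ(ξ₂)) + ⋯}`. -/
def wal {F : Type} [Field F] [Fintype F] (φ : Fin (Fintype.card F) ≃ F) (k : ℕ) (x : ℝ) : ℂ :=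
  omg (Fintype.card F) ^
    ∑ i ∈ Finset.range k,
      fromF φ (toF φ (ndigit (Fintype.card F) k i) * toF φ (rdigit (Fintype.card F) x i))

/-- the multivariate `b`-adic Walsh function `wal_k(x) = ∏_j wal_{k_j}(x_j)`. -/
def walv {F : Type} [Field F] [Fintype F] {s : ℕ} (φ : Fin (Fintype.card F) ≃ F)
    (k : Fin s → ℕ) (x : Fin s → ℝ) : ℂ :=
  ∏ j, wal φ (k j) (x j)

/-- the `j`-th coordinate of the `h`-th point of the digital net with generating
matrices `C_1,…,C_s` (with `n` rows, `m` columns, rows of index `≥ n` unused). -/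
def dnet {F : Type} [Field F] [Fintype F] {s m : ℕ} (φ : Fin (Fintype.card F) ≃ F)
    (C : Fin s → ℕ → Fin m → F) (n : ℕ) (h : ℕ) (j : Fin s) : ℝ :=
  ∑ i ∈ Finset.range n,
    (fromF φ (∑ c, C j i c * toF φ (ndigit (Fintype.card F) h (c : ℕ))) : ℝ) /
      (Fintype.card F : ℝ) ^ (i + 1)

/-- membership in the dual net `P^⊥`:
`C_1^⊤ ν_n(k_1) + ⋯ + C_s^⊤ ν_n(k_s) = 0 ∈ F^m`. -/
def inDual {F : Type} [Field F] [Fintype F] {s m : ℕ} (φ : Fin (Fintype.card F) ≃ F)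
    (C : Fin s → ℕ → Fin m → F) (n : ℕ) (k : Fin s → ℕ) : Prop :=
  ∀ c : Fin m,
    ∑ j, ∑ i ∈ Finset.range n, C j i c * toF φ (ndigit (Fintype.card F) (k j) i) = 0

/-- `V(u,k) = {ℓ ∈ ℕ₀^s : ℓ_j < b^{k_j} if j ∈ u, ℓ_j = 0 otherwise}`. -/
def Vset (b : ℕ) {s : ℕ} (u : Finset (Fin s)) (k : Fin s → ℕ) : Finset (Fin s → ℕ) :=
  Fintype.piFinset fun j => Finset.range (if j ∈ u then b ^ k j else 1)

/-- `A(u,l) = {ℓ ∈ ℕ₀^s : b^{l_j-1} ≤ ℓ_j < b^{l_j} if j ∈ u, ℓ_j = 0 otherwise}`. -/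
def Aset (b : ℕ) {s : ℕ} (u : Finset (Fin s)) (l : Fin s → ℕ) : Finset (Fin s → ℕ) :=
  (Vset b u l).filter fun ℓ => ∀ j ∈ u, b ^ (l j - 1) ≤ ℓ j

/-- `k + 1_v`: add one to the components in `v`. -/
def plusOne {s : ℕ} (k : Fin s → ℕ) (v : Finset (Fin s)) : Fin s → ℕ :=
  fun j => if j ∈ v then k j + 1 else k j

/-- the gain coefficient `Γ_{u,k}` of an `N`-element point set in base `b`. -/
def gain {s : ℕ} (b N : ℕ) (x : Fin N → Fin s → ℝ) (u : Finset (Fin s))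
    (k : Fin s → ℕ) : ℝ :=
  (1 / N) * ∑ i, ∑ i', ∏ j ∈ u,
    ((b * (if ⌊(b : ℝ) ^ (k j + 1) * x i j⌋ = ⌊(b : ℝ) ^ (k j + 1) * x i' j⌋ then (1:ℝ) else 0) -
        (if ⌊(b : ℝ) ^ (k j) * x i j⌋ = ⌊(b : ℝ) ^ (k j) * x i' j⌋ then (1:ℝ) else 0)) /
      (b - 1))

/-- `C_{u,k}`: the matrix stacking the first `k_j` rows of `C_j` for `j ∈ u`
(a generating matrix `C_j` having `n` rows). -/
def Cuk {F : Type} [Field F] [Fintype F] {s m : ℕ} (C : Fin s → ℕ → Fin m → F) (n : ℕ)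
    (u : Finset (Fin s)) (k : Fin s → ℕ) :
    Matrix ((j : Fin s) × Fin (min (if j ∈ u then k j else 0) n)) (Fin m) F :=
  fun p c => C p.1 (p.2 : ℕ) c

/-- `C` generates a digital `(t,m,s)`-net in base `b = |F|`:
`C_{u,k}` has full row rank whenever `|k| ≤ m - t`. -/
def IsDigitalTNet {F : Type} [Field F] [Fintype F] {s m : ℕ}
    (C : Fin s → ℕ → Fin m → F) (n : ℕ) (t : ℕ) : Prop :=
  ∀ u : Finset (Fin s), ∀ k : Fin s → ℕ,
    (∑ j ∈ u, k j) + t ≤ m → (Cuk C n u k).rank = ∑ j ∈ u, k j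

/-- the upper bound `B(u,k) = b^{m - rank(C_{u,k})} (b-1)^{rank(C_{u,k}) - rank(C_{u,k+1_u})}`. -/
def Bcoef {F : Type} [Field F] [Fintype F] {s m : ℕ} (C : Fin s → ℕ → Fin m → F) (n : ℕ)
    (u : Finset (Fin s)) (k : Fin s → ℕ) : ℝ :=
  (Fintype.card F : ℝ) ^ ((m : ℤ) - ((Cuk C n u k).rank : ℤ)) *
    ((Fintype.card F : ℝ) - 1) ^
      (((Cuk C n u k).rank : ℤ) - ((Cuk C n u (plusOne k u)).rank : ℤ))

/-- `t*_u = m + 1 - min{|k| : k ∈ ℕ^{|u|}, C_{u,k} not full row rank}`. -/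
def tstar {F : Type} [Field F] [Fintype F] {s m : ℕ} (C : Fin s → ℕ → Fin m → F) (n : ℕ)
    (u : Finset (Fin s)) : ℤ :=
  (m : ℤ) + 1 -
    (sInf {r : ℕ | ∃ k : Fin s → ℕ, (∀ j ∈ u, 1 ≤ k j) ∧
      (Cuk C n u k).rank ≠ ∑ j ∈ u, k j ∧ r = ∑ j ∈ u, k j} : ℕ)

end

/-!
Encode `ℓ : Fin s → ℕ` by its array of digits `j, i ↦ φ(ℓ_{j,i})`. This is injective, it maps
`V(u,κ)` onto the subspace of digit arrays supported on the first `κ_j` digits of the coordinates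
`j ∈ u`, and it turns the dual-net condition into the kernel of an `F`-linear map. Hence
`V(u,k+1_u) ∩ P^⊥` becomes a subspace `W`, the top-digit projection `T` is linear on it with
`W ∩ ker T = V(u,k) ∩ P^⊥`, and `A(u,k+1_u) ∩ P^⊥` is the preimage in `W` of the vectors with
no zero entry. Every nonempty fibre of `T` on `W` is a coset of `W ∩ ker T`.
-/

theorem AddMonoidHom.natCard_preimage_of_subset_range {G H : Type*} [AddGroup G] [AddGroup H]
    (f : G →+ H) {Q : Set H} (hQ : Q ⊆ Set.range f) :
    Nat.card (f ⁻¹' Q) = Nat.card f.ker * Nat.card Q := by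
  have hrange : Q ⊆ Set.range (QuotientAddGroup.kerLift f) := by
    rintro y hy
    obtain ⟨x, rfl⟩ := hQ hy
    exact ⟨x, rfl⟩
  change Nat.card (QuotientAddGroup.mk ⁻¹' (QuotientAddGroup.kerLift f ⁻¹' Q)) = _
  rw [Nat.card_congr (QuotientAddGroup.preimageMkEquivAddSubgroupProdSet _ _), Nat.card_prod,
    Nat.card_coe_set_eq, Nat.card_coe_set_eq,
    Set.ncard_preimage_of_injective_subset_range (QuotientAddGroup.kerLift_injective f) hrange]

theorem AddSubgroup.ncard_inter_preimage_eq_mul {G H : Type*} [AddGroup G] [AddGroup H]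
    (W : AddSubgroup G) (f : G →+ H) (Q : Set H) :
    ((W : Set G) ∩ f ⁻¹' Q).ncard = ((W : Set G) ∩ f ⁻¹' {0}).ncard * (f '' W ∩ Q).ncard := by
  have hW (R : Set H) : ((W : Set G) ∩ f ⁻¹' R).ncard = Nat.card ((f.comp W.subtype) ⁻¹' R) := by
    rw [← Subtype.image_preimage_coe, Set.ncard_image_of_injective _ Subtype.val_injective]
    rfl
  have hQ : (W : Set G) ∩ f ⁻¹' Q = (W : Set G) ∩ f ⁻¹' (f '' W ∩ Q) := by
    rw [Set.preimage_inter, ← Set.inter_assoc, Set.inter_eq_left.2 (Set.subset_preimage_image _ _)]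
  rw [hQ, hW, hW, ← Nat.card_coe_set_eq]
  exact (f.comp W.subtype).natCard_preimage_of_subset_range
    (by rintro y ⟨⟨x, hx, rfl⟩, -⟩; exact ⟨⟨x, hx⟩, rfl⟩)

section Digits

variable {b : ℕ}

theorem ndigit_lt (hb : 0 < b) (a i : ℕ) : ndigit b a i < b := Nat.mod_lt _ hb

theorem ndigit_eq_zero_of_lt {a i : ℕ} (h : a < b ^ i) : ndigit b a i = 0 := by
  simp [ndigit, Nat.div_eq_of_lt h]

theorem ndigit_div_pow (a L i : ℕ) : ndigit b (a / b ^ L) i = ndigit b a (L + i) := by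
  simp only [ndigit, Nat.div_div_eq_div_mul, pow_add]

theorem eq_of_forall_ndigit_eq (hb : 1 < b) {a c : ℕ} (h : ∀ i, ndigit b a i = ndigit b c i) :
    a = c := by
  have hlt {x : ℕ} (hx : x ≤ a + c) : x < b ^ (a + c) :=
    (Nat.lt_pow_self hb).trans_le (Nat.pow_le_pow_right (by omega) hx)
  have : finFunctionFinEquiv.symm (⟨a, hlt (by omega)⟩ : Fin (b ^ (a + c))) =
      finFunctionFinEquiv.symm ⟨c, hlt (by omega)⟩ :=
    funext fun i => Fin.ext (h i)
  simpa using this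

theorem lt_pow_iff_forall_ndigit_eq_zero (hb : 1 < b) {a L : ℕ} :
    a < b ^ L ↔ ∀ i, L ≤ i → ndigit b a i = 0 := by
  refine ⟨fun h i hi => ndigit_eq_zero_of_lt (h.trans_le (Nat.pow_le_pow_right (by omega) hi)),
    fun h => ?_⟩
  have : a / b ^ L = 0 :=
    eq_of_forall_ndigit_eq hb fun i => by
      rw [ndigit_div_pow, h (L + i) (by omega)]
      simp [ndigit]
  rwa [Nat.div_eq_zero_iff, or_iff_right (by positivity)] at this

theorem pow_le_iff_ndigit_ne_zero (hb : 0 < b) {a L : ℕ} (ha : a < b ^ (L + 1)) :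
    b ^ L ≤ a ↔ ndigit b a L ≠ 0 := by
  have hq : a / b ^ L < b := by
    rwa [Nat.div_lt_iff_lt_mul (by positivity), ← pow_succ']
  rw [ndigit, Nat.mod_eq_of_lt hq, Ne, Nat.div_eq_zero_iff, not_or, not_lt]
  exact (and_iff_right (by positivity)).symm

theorem exists_ndigit_eq (g : ℕ → Fin b) (L : ℕ) :
    ∃ a < b ^ L, ∀ i < L, ndigit b a i = g i := by
  refine ⟨finFunctionFinEquiv (fun i : Fin L => g i), Fin.is_lt _, fun i hi => ?_⟩
  exact congrArg (fun v => (v ⟨i, hi⟩ : ℕ))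
    (finFunctionFinEquiv.symm_apply_apply fun i : Fin L => g i)

theorem mem_Vset_iff {s : ℕ} (u : Finset (Fin s)) (κ ℓ : Fin s → ℕ) :
    ℓ ∈ Vset b u κ ↔ ∀ j, ℓ j < b ^ (if j ∈ u then κ j else 0) := by
  simp only [Vset, Fintype.mem_piFinset, Finset.mem_range]
  exact forall_congr' fun j => by split_ifs <;> simp

end Digits

section DigitArrays

variable (R : Type*) [Semiring R] {s : ℕ}

def digitSubmodule (u : Finset (Fin s)) (κ : Fin s → ℕ) : Submodule R (Fin s → ℕ → R) where
  carrier := {x | ∀ j i, (if j ∈ u then κ j else 0) ≤ i → x j i = 0}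
  zero_mem' _ _ _ := rfl
  add_mem' hx hy j i hi := by simp [hx j i hi, hy j i hi]
  smul_mem' c x hx j i hi := by simp [hx j i hi]

def topDigits (u : Finset (Fin s)) (k : Fin s → ℕ) :
    (Fin s → ℕ → R) →ₗ[R] ({j // j ∈ u} → R) where
  toFun x j := x j (k j)
  map_add' _ _ := rfl
  map_smul' _ _ := rfl

variable {R}

theorem mem_digitSubmodule {u : Finset (Fin s)} {κ : Fin s → ℕ} {x : Fin s → ℕ → R} :
    x ∈ digitSubmodule R u κ ↔ ∀ j i, (if j ∈ u then κ j else 0) ≤ i → x j i = 0 :=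
  Iff.rfl

theorem digitSubmodule_plusOne_inf_ker_topDigits (u : Finset (Fin s)) (k : Fin s → ℕ) :
    digitSubmodule R u (plusOne k u) ⊓ LinearMap.ker (topDigits R u k) =
      digitSubmodule R u k := by
  ext x
  simp only [Submodule.mem_inf, mem_digitSubmodule, LinearMap.mem_ker, funext_iff, topDigits,
    LinearMap.coe_mk, AddHom.coe_mk, Pi.zero_apply, Subtype.forall, plusOne]
  constructor
  · rintro ⟨h, htop⟩ j i hi
    by_cases hj : j ∈ u
    · rcases (if_pos hj ▸ hi).eq_or_lt with rfl | hlt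
      · exact htop j hj
      · exact h j i (by simpa [hj] using hlt)
    · exact h j i (by simp [hj])
  · intro h
    exact ⟨fun j i hi => h j i (by split_ifs at hi ⊢ <;> omega),
      fun j hj => h j (k j) (by simp [hj])⟩

end DigitArrays

def dualMap {R : Type*} [CommSemiring R] {s m : ℕ} (C : Fin s → ℕ → Fin m → R) (n : ℕ) :
    (Fin s → ℕ → R) →ₗ[R] (Fin m → R) where
  toFun x c := ∑ j, ∑ i ∈ range n, C j i c * x j i
  map_add' x y := by ext c; simp [mul_add, sum_add_distrib]
  map_smul' a x := by ext c; simp [mul_left_comm _ a, mul_sum]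

section DigitEncoding

variable {F : Type} [Field F] [Fintype F] (φ : Fin (Fintype.card F) ≃ F) {s m : ℕ}

local notation "b" => Fintype.card F

theorem toF_injOn {a c : ℕ} (ha : a < b) (hc : c < b) (h : toF φ a = toF φ c) : a = c := by
  simpa [Nat.mod_eq_of_lt ha, Nat.mod_eq_of_lt hc] using congrArg Fin.val (φ.injective h)

theorem toF_zero (hφ : φ ⟨0, Fintype.card_pos⟩ = 0) : toF φ 0 = 0 := hφ

theorem toF_ndigit_eq_zero_iff (hφ : φ ⟨0, Fintype.card_pos⟩ = 0) (a i : ℕ) :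
    toF φ (ndigit b a i) = 0 ↔ ndigit b a i = 0 :=
  ⟨fun h => toF_injOn φ (ndigit_lt Fintype.card_pos a i) Fintype.card_pos
    (h.trans (toF_zero φ hφ).symm), fun h => h ▸ toF_zero φ hφ⟩

theorem exists_toF_ndigit_eq (g : ℕ → F) (L : ℕ) :
    ∃ a < b ^ L, ∀ i < L, toF φ (ndigit b a i) = g i := by
  obtain ⟨a, ha, hdig⟩ := exists_ndigit_eq (fun i => φ.symm (g i)) L
  refine ⟨a, ha, fun i hi => ?_⟩
  rw [toF, hdig i hi]
  simp [Nat.mod_eq_of_lt (φ.symm (g i)).is_lt]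

def digitVec (ℓ : Fin s → ℕ) : Fin s → ℕ → F := fun j i => toF φ (ndigit b (ℓ j) i)

theorem digitVec_injective : Function.Injective (digitVec φ (s := s)) := fun _ _ h =>
  funext fun j => eq_of_forall_ndigit_eq Fintype.one_lt_card fun i =>
    toF_injOn φ (ndigit_lt Fintype.card_pos _ _) (ndigit_lt Fintype.card_pos _ _)
      (congrFun (congrFun h j) i)

theorem inDual_iff_dualMap_digitVec (C : Fin s → ℕ → Fin m → F) (n : ℕ) (ℓ : Fin s → ℕ) :
    inDual φ C n ℓ ↔ dualMap C n (digitVec φ ℓ) = 0 :=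
  funext_iff.symm

theorem mem_Vset_iff_digitVec_mem (hφ : φ ⟨0, Fintype.card_pos⟩ = 0) (u : Finset (Fin s))
    (κ ℓ : Fin s → ℕ) : ℓ ∈ Vset b u κ ↔ digitVec φ ℓ ∈ digitSubmodule F u κ := by
  simp only [mem_Vset_iff, mem_digitSubmodule, digitVec, toF_ndigit_eq_zero_iff φ hφ,
    lt_pow_iff_forall_ndigit_eq_zero Fintype.one_lt_card]

theorem mem_range_digitVec (hφ : φ ⟨0, Fintype.card_pos⟩ = 0) {u : Finset (Fin s)}
    {κ : Fin s → ℕ} {x : Fin s → ℕ → F} (hx : x ∈ digitSubmodule F u κ) :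
    x ∈ Set.range (digitVec φ) := by
  choose a ha hdig using fun j => exists_toF_ndigit_eq φ (x j) (if j ∈ u then κ j else 0)
  refine ⟨a, funext fun j => funext fun i => ?_⟩
  by_cases hi : i < if j ∈ u then κ j else 0
  · exact hdig j i hi
  · rw [not_lt] at hi
    rw [digitVec, hx j i hi,
      (lt_pow_iff_forall_ndigit_eq_zero Fintype.one_lt_card).1 (ha j) i hi, toF_zero φ hφ]

theorem image_digitVec_Vset_inDual (hφ : φ ⟨0, Fintype.card_pos⟩ = 0)
    (C : Fin s → ℕ → Fin m → F) (n : ℕ) (u : Finset (Fin s)) (κ : Fin s → ℕ) :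
    digitVec φ '' {ℓ | ℓ ∈ Vset b u κ ∧ inDual φ C n ℓ} =
      (digitSubmodule F u κ ⊓ LinearMap.ker (dualMap C n) : Submodule F _) := by
  ext x
  constructor
  · rintro ⟨ℓ, ⟨hV, hD⟩, rfl⟩
    exact ⟨(mem_Vset_iff_digitVec_mem φ hφ u κ ℓ).1 hV,
      (inDual_iff_dualMap_digitVec φ C n ℓ).1 hD⟩
  · rintro ⟨hS, hD⟩
    obtain ⟨ℓ, rfl⟩ := mem_range_digitVec φ hφ hS
    exact ⟨ℓ, ⟨(mem_Vset_iff_digitVec_mem φ hφ u κ ℓ).2 hS,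
      (inDual_iff_dualMap_digitVec φ C n ℓ).2 hD⟩, rfl⟩

theorem mem_Aset_plusOne_iff (hφ : φ ⟨0, Fintype.card_pos⟩ = 0) (u : Finset (Fin s))
    (k ℓ : Fin s → ℕ) : ℓ ∈ Aset b u (plusOne k u) ↔
      ℓ ∈ Vset b u (plusOne k u) ∧ ∀ j, topDigits F u k (digitVec φ ℓ) j ≠ 0 := by
  rw [Aset, Finset.mem_filter]
  refine and_congr_right fun hV => ?_
  rw [Subtype.forall]
  refine forall₂_congr fun j hj => ?_
  have hlt : ℓ j < b ^ (k j + 1) := by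
    simpa [plusOne, hj] using (mem_Vset_iff u _ ℓ).1 hV j
  rw [plusOne, if_pos hj, Nat.add_sub_cancel, pow_le_iff_ndigit_ne_zero Fintype.card_pos hlt]
  exact (toF_ndigit_eq_zero_iff φ hφ _ _).not.symm

end DigitEncoding

/-- `|A(u,k+1_u) ∩ P^⊥| = |V(u,k) ∩ P^⊥| ⬝ |Q(u,k+1_u,P)|`, where
`Q(u,k+1_u,P)` is the image of the top-digit projection of `V(u,k+1_u) ∩ P^⊥`
intersected with `(F∖{0})^{|u|}`. -/
theorem stmt9 {F : Type} [Field F] [Fintype F] {s m : ℕ}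
    (φ : Fin (Fintype.card F) ≃ F) (hφ : φ ⟨0, Fintype.card_pos⟩ = 0)
    (C : Fin s → ℕ → Fin m → F) (n : ℕ)
    (u : Finset (Fin s)) (k : Fin s → ℕ) :
    Set.ncard {ℓ : Fin s → ℕ |
        ℓ ∈ Aset (Fintype.card F) u (plusOne k u) ∧ inDual φ C n ℓ} =
      Set.ncard {ℓ : Fin s → ℕ | ℓ ∈ Vset (Fintype.card F) u k ∧ inDual φ C n ℓ} *
      Set.ncard {y : {j : Fin s // j ∈ u} → F |
        (∃ ℓ : Fin s → ℕ, ℓ ∈ Vset (Fintype.card F) u (plusOne k u) ∧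
          inDual φ C n ℓ ∧
          ∀ j : {j : Fin s // j ∈ u},
            y j = toF φ (ndigit (Fintype.card F) (ℓ (j : Fin s)) (k (j : Fin s)))) ∧
        ∀ j : {j : Fin s // j ∈ u}, y j ≠ 0} := by
  set W := digitSubmodule F u (plusOne k u) ⊓ LinearMap.ker (dualMap C n)
  set T := topDigits F u k
  set N : Set ({j // j ∈ u} → F) := {y | ∀ j, y j ≠ 0}
  have hA : {ℓ | ℓ ∈ Aset (Fintype.card F) u (plusOne k u) ∧ inDual φ C n ℓ} =
      {ℓ | ℓ ∈ Vset (Fintype.card F) u (plusOne k u) ∧ inDual φ C n ℓ} ∩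
        digitVec φ ⁻¹' (T ⁻¹' N) := by
    ext ℓ
    simp only [Set.mem_ofPred_eq, mem_Aset_plusOne_iff φ hφ, Set.mem_inter_iff,
      Set.mem_preimage, N]
    tauto
  have hker : (W : Set _) ∩ T ⁻¹' {0} =
      (digitSubmodule F u k ⊓ LinearMap.ker (dualMap C n) : Submodule F _) := by
    rw [← digitSubmodule_plusOne_inf_ker_topDigits]
    ext x
    simp only [Set.mem_inter_iff, SetLike.mem_coe, Submodule.mem_inf, LinearMap.mem_ker,
      Set.mem_preimage, Set.mem_singleton_iff, W, T]
    tauto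
  rw [hA, ← Set.ncard_image_of_injective _ (digitVec_injective φ),
    ← Set.ncard_image_of_injective {ℓ | ℓ ∈ Vset _ u k ∧ _} (digitVec_injective φ),
    Set.image_inter_preimage, image_digitVec_Vset_inDual φ hφ, image_digitVec_Vset_inDual φ hφ,
    ← hker]
  refine (W.toAddSubgroup.ncard_inter_preimage_eq_mul T.toAddMonoidHom N).trans ?_
  congr 2
  change T '' W ∩ N = _
  rw [← image_digitVec_Vset_inDual φ hφ, ← Set.image_comp]
  ext y
  simp only [Set.mem_ofPred_eq, Set.mem_inter_iff, Set.mem_image, funext_iff, N, and_assoc]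
  exact and_congr_left' (exists_congr fun ℓ =>
    and_congr_right' (and_congr_right' (forall_congr' fun j => eq_comm)))
end

section
/- Let P be a digital (0,m,s)-net in prime power base b. Then every gain coefficient satisfies Γ_{u,k} ≤ (b/(b−1))^{s−1}. -/
open Finset

/-! Write `b = |F|`. Two points lie in the same `b`-adic box at level `l_j` in coordinate `j`
iff they share the first `min (l_j, n)` digits there, and for a digital net these are the linear
conditions `C_{u,l} y = C_{u,l} y'` on the coefficient vectors `y, y' ∈ F^m`. For a `(0,m,s)`-net
`C_{u,l}` has rank `min (|l|, m)`, so every such box holds `b ^ (m - |l|)` points. Expanding the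
product in `Γ_{u,k}` over the coordinates with `k_j < n` (the others contribute a plain indicator)
and counting gives the closed form `Γ_{u,k} = Δ^r f 0 / (b-1)^r` with `f w = b ^ max w d`,
`r = #{j ∈ u | k_j < n}` and `d = m - ∑_{j ∈ u} min (k_j, n)`. As `Δ f w = (b-1) b^w [d ≤ w]`,
the numerator is `(b-1)` times an alternating binomial sum, which is at most `b ^ (r-1)`: by the
binomial theorem when `d ≤ 1`, and otherwise because `r ≤ s ≤ b + 1` (a digital `(0,m,s)`-net
with `m ≥ 2` has at most `b + 1` coordinates) makes its terms increasing, so that it is bounded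
by its last term. -/

open fwdDiff

theorem sum_range_alternating_mem_Icc {G : Type*} [AddCommGroup G] [PartialOrder G]
    [IsOrderedAddMonoid G] {a : ℕ → G} {p : ℕ} (h0 : 0 ≤ a 0)
    (hmono : ∀ k < p, a k ≤ a (k + 1)) :
    ∑ k ∈ range (p + 1), (-1 : ℤ) ^ (p - k) • a k ∈ Set.Icc 0 (a p) := by
  induction p with
  | zero => simpa using h0
  | succ p ih =>
    obtain ⟨hS0, hSp⟩ := ih fun k hk => hmono k (by omega)
    have hflip : ∑ k ∈ range (p + 1), (-1 : ℤ) ^ (p + 1 - k) • a k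
        = -∑ k ∈ range (p + 1), (-1 : ℤ) ^ (p - k) • a k := by
      rw [← sum_neg_distrib]
      refine sum_congr rfl fun k hk => ?_
      rw [Nat.sub_add_comm (Nat.lt_succ_iff.mp (mem_range.mp hk)), pow_succ, mul_neg_one,
        neg_smul]
    rw [sum_range_succ, hflip, Nat.sub_self, pow_zero, one_smul, neg_add_eq_sub]
    exact ⟨sub_nonneg.mpr (hSp.trans (hmono p p.lt_succ_self)), sub_le_self _ hS0⟩

theorem Nat.choose_le_choose_succ_mul {p k b : ℕ} (hk : k < p) (hp : p ≤ b) :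
    p.choose k ≤ p.choose (k + 1) * b :=
  calc p.choose k ≤ p.choose k * (p - k) := Nat.le_mul_of_pos_right _ (by omega)
    _ = p.choose (k + 1) * (k + 1) := (Nat.choose_succ_right_eq p k).symm
    _ ≤ p.choose (k + 1) * b := Nat.mul_le_mul_left _ (by omega)

theorem fwdDiff_iter_apply_zero (f : ℕ → ℝ) (p : ℕ) :
    (Δ_[1])^[p] f 0
      = ∑ k ∈ range (p + 1), (-1 : ℤ) ^ (p - k) • ((p.choose k : ℝ) * f k) := by
  rw [fwdDiff_iter_eq_sum_shift]
  refine sum_congr rfl fun k _ => ?_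
  rw [zero_add, smul_eq_mul, mul_one, mul_zsmul, natCast_zsmul, nsmul_eq_mul]

theorem fwdDiff_pow_max (b : ℝ) (d : ℕ) :
    Δ_[1] (fun w : ℕ => b ^ max w d) = (b - 1) • fun w => if d ≤ w then b ^ w else 0 := by
  funext w
  simp only [fwdDiff, Pi.smul_apply, smul_eq_mul]
  split_ifs with h
  · rw [max_eq_left h, max_eq_left (by omega), pow_succ]
    ring
  · rw [max_eq_right (by omega), max_eq_right (by omega), sub_self, mul_zero]

theorem fwdDiff_iter_ite_pow_eq_of_le_one (b : ℝ) {d : ℕ} (hd : d ≤ 1) (p : ℕ) :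
    (Δ_[1])^[p] (fun w : ℕ => if d ≤ w then b ^ w else 0) 0 = (b - 1) ^ p - (-1) ^ p * d := by
  have hsplit : ∀ k : ℕ, (if d ≤ k then b ^ k else 0) = b ^ k - if k < d then 1 else 0 := by
    intro k
    split_ifs with h1 h2 h2
    · omega
    · rw [sub_zero]
    · obtain rfl : k = 0 := by omega
      rw [pow_zero, sub_self]
    · omega
  have hbin : ∑ k ∈ range (p + 1), (-1 : ℤ) ^ (p - k) • ((p.choose k : ℝ) * b ^ k)
      = (b - 1) ^ p := by
    rw [sub_eq_add_neg, add_pow]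
    refine sum_congr rfl fun k _ => ?_
    rw [zsmul_eq_mul]
    push_cast
    ring
  have htail :
      ∑ k ∈ range (p + 1), (-1 : ℤ) ^ (p - k) • ((p.choose k : ℝ) * if k < d then 1 else 0)
        = (-1) ^ p * d := by
    rw [sum_eq_single 0 (fun k _ hk => by simp [show ¬ k < d by omega]) (by simp)]
    interval_cases d <;> simp
  rw [fwdDiff_iter_apply_zero]
  simp only [hsplit, mul_sub, smul_sub, sum_sub_distrib, hbin, htail]

theorem fwdDiff_iter_ite_pow_le {b p d : ℕ} (hb : 1 ≤ b) (hpd : p ≤ b ∨ d ≤ 1) :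
    (Δ_[1])^[p] (fun w : ℕ => if d ≤ w then (b : ℝ) ^ w else 0) 0 ≤ (b : ℝ) ^ p := by
  rcases le_or_gt p b with hp | hp
  · rw [fwdDiff_iter_apply_zero]
    refine ((sum_range_alternating_mem_Icc (by positivity) fun k hk => ?_).2).trans ?_
    · split_ifs with h1 h2 h2
      · have := Nat.choose_le_choose_succ_mul hk hp
        calc (p.choose k : ℝ) * (b : ℝ) ^ k
            ≤ ((p.choose (k + 1) * b : ℕ) : ℝ) * (b : ℝ) ^ k := by gcongr
          _ = _ := by push_cast; ring
      · omega
      · simp only [mul_zero]; positivity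
      · simp
    · simp only [Nat.choose_self, Nat.cast_one, one_mul]
      split_ifs <;> first | exact le_rfl | positivity
  have hd : d ≤ 1 := hpd.resolve_left (by omega)
  rw [fwdDiff_iter_ite_pow_eq_of_le_one _ hd]
  have hpow := pow_add_pow_le (x := (b : ℝ) - 1) (y := 1) (sub_nonneg.mpr (by exact_mod_cast hb))
    zero_le_one (by omega : p ≠ 0)
  have hsign : -1 ≤ (-1 : ℝ) ^ p * d := by
    interval_cases d <;> rcases neg_one_pow_eq_or ℝ p with h | h <;> simp [h]
  rw [one_pow, sub_add_cancel] at hpow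
  linarith

theorem fwdDiff_iter_pow_max_div_le {b r d : ℕ} (hb : 2 ≤ b) (hr : 1 ≤ r)
    (hrd : r ≤ b + 1 ∨ d ≤ 1) :
    (Δ_[1])^[r] (fun w : ℕ => (b : ℝ) ^ max w d) 0 / ((b : ℝ) - 1) ^ r
      ≤ ((b : ℝ) / ((b : ℝ) - 1)) ^ (r - 1) := by
  obtain ⟨p, rfl⟩ : ∃ p, r = p + 1 := ⟨r - 1, by omega⟩
  have hb1 : (0 : ℝ) < b - 1 := by
    have : (2 : ℝ) ≤ b := by exact_mod_cast hb
    linarith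
  rw [Function.iterate_succ_apply, fwdDiff_pow_max, fwdDiff_iter_const_smul, Pi.smul_apply,
    smul_eq_mul, Nat.add_sub_cancel, div_pow, pow_succ', mul_div_mul_left _ _ hb1.ne']
  exact div_le_div_of_nonneg_right (fwdDiff_iter_ite_pow_le (by omega) (by omega))
    (pow_nonneg hb1.le p)

theorem sum_powerset_eq_fwdDiff_iter {ι : Type*} [DecidableEq ι] (u₀ : Finset ι) (b : ℝ)
    (d : ℕ) :
    ∑ v ∈ u₀.powerset, b ^ #v * (-1) ^ #(u₀ \ v) * b ^ (d - #v)
      = (Δ_[1])^[#u₀] (fun w : ℕ => b ^ max w d) 0 := by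
  rw [sum_congr rfl fun v hv => by rw [card_sdiff_of_subset (mem_powerset.mp hv)],
    sum_powerset_apply_card (fun w => b ^ w * (-1) ^ (#u₀ - w) * b ^ (d - w)),
    fwdDiff_iter_apply_zero]
  refine sum_congr rfl fun w _ => ?_
  rw [← add_tsub_eq_max, pow_add, nsmul_eq_mul, zsmul_eq_mul]
  push_cast
  ring

theorem prod_mul_sub_div_eq_sum_powerset {ι R : Type*} [Field R] [DecidableEq ι]
    {u u₀ : Finset ι} (hu₀ : u₀ ⊆ u) {c : R} (hc : c - 1 ≠ 0) (X Y : ι → R)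
    (hXY : ∀ j ∈ u \ u₀, X j = Y j) :
    ∏ j ∈ u, (c * X j - Y j) / (c - 1)
      = (∑ v ∈ u₀.powerset,
          c ^ #v * (-1) ^ #(u₀ \ v) * ∏ j ∈ u, if j ∈ v then X j else Y j) / (c - 1) ^ #u₀ := by
  have hout : ∏ j ∈ u \ u₀, (c * X j - Y j) / (c - 1) = ∏ j ∈ u \ u₀, Y j :=
    prod_congr rfl fun j hj => by rw [hXY j hj, ← sub_one_mul, mul_div_cancel_left₀ _ hc]
  rw [← prod_sdiff hu₀, hout, prod_div_distrib, prod_const, mul_div_assoc']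
  simp_rw [sub_eq_add_neg, prod_add, mul_sum]
  refine congrArg (· / _) (sum_congr rfl fun v hv => ?_)
  have hv : v ⊆ u₀ := mem_powerset.mp hv
  rw [← prod_sdiff hu₀, ← prod_sdiff hv (s₂ := u₀),
    prod_congr rfl fun j hj => if_neg fun hjv => (mem_sdiff.mp hj).2 (hv hjv),
    prod_congr rfl fun j hj => if_neg (mem_sdiff.mp hj).2,
    prod_congr rfl fun j hj => if_pos hj, prod_mul_distrib, prod_const, prod_neg]
  ring

theorem mul_sum_range_succ_div_pow {b : ℝ} (hb : b ≠ 0) (a : ℕ → ℕ) (n : ℕ) :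
    b * ∑ i ∈ range (n + 1), (a i : ℝ) / b ^ (i + 1)
      = a 0 + ∑ i ∈ range n, (a (i + 1) : ℝ) / b ^ (i + 1) := by
  rw [sum_range_succ', mul_add, mul_sum, add_comm]
  congr 1
  · rw [zero_add, pow_one, mul_div_cancel₀ _ hb]
  · refine sum_congr rfl fun i _ => ?_
    rw [pow_succ _ (i + 1)]
    field_simp

theorem sum_range_div_pow_mem_Ico {b : ℕ} (hb : 0 < b) {a : ℕ → ℕ} (ha : ∀ i, a i < b)
    (n : ℕ) :
    ∑ i ∈ range n, (a i : ℝ) / (b : ℝ) ^ (i + 1) ∈ Set.Ico 0 1 := by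
  induction n generalizing a with
  | zero => simp
  | succ n ih =>
    have hbR : (0 : ℝ) < b := by exact_mod_cast hb
    obtain ⟨h0, h1⟩ := ih fun i => ha (i + 1)
    have hmul := mul_sum_range_succ_div_pow hbR.ne' a n
    have ha0 : (a 0 : ℝ) + 1 ≤ b := by exact_mod_cast ha 0
    constructor
    · have : 0 ≤ (b : ℝ) * ∑ i ∈ range (n + 1), (a i : ℝ) / (b : ℝ) ^ (i + 1) := by
        rw [hmul]; positivity
      exact nonneg_of_mul_nonneg_right (by linarith) hbR
    · refine lt_of_mul_lt_mul_left ?_ hbR.le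
      rw [hmul, mul_one]
      linarith

theorem Int.mul_add_eq_mul_add_iff {B p p' r r' : ℤ} (hr : r ∈ Set.Ico 0 B)
    (hr' : r' ∈ Set.Ico 0 B) : p * B + r = p' * B + r' ↔ p = p' ∧ r = r' := by
  refine ⟨fun h => ?_, fun ⟨rfl, rfl⟩ => rfl⟩
  obtain ⟨hr0, hrB⟩ := hr
  obtain ⟨hr0', hrB'⟩ := hr'
  have hp : p = p' := by
    rcases lt_trichotomy p p' with hlt | heq | hgt
    · nlinarith
    · exact heq
    · nlinarith
  subst hp
  exact ⟨rfl, by linarith⟩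

theorem floor_pow_mul_sum_div_pow_eq_iff {b : ℕ} (hb : 0 < b) {a a' : ℕ → ℕ}
    (ha : ∀ i, a i < b) (ha' : ∀ i, a' i < b) (l n : ℕ) :
    ⌊(b : ℝ) ^ l * ∑ i ∈ range n, (a i : ℝ) / (b : ℝ) ^ (i + 1)⌋
        = ⌊(b : ℝ) ^ l * ∑ i ∈ range n, (a' i : ℝ) / (b : ℝ) ^ (i + 1)⌋
      ↔ ∀ t < min l n, a t = a' t := by
  induction l generalizing n a a' with
  | zero =>
    simp only [pow_zero, one_mul, Nat.zero_min, Nat.not_lt_zero, IsEmpty.forall_iff,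
      implies_true, iff_true]
    rw [Int.floor_eq_zero_iff.mpr (sum_range_div_pow_mem_Ico hb ha n),
      Int.floor_eq_zero_iff.mpr (sum_range_div_pow_mem_Ico hb ha' n)]
  | succ l ih =>
    cases n with
    | zero => simp
    | succ n =>
      have hbR : (b : ℝ) ≠ 0 := by exact_mod_cast hb.ne'
      -- the leading digit splits off as the integer `a 0 * b ^ l`
      have hsplit : ∀ a : ℕ → ℕ, (∀ i, a i < b) →
          ⌊(b : ℝ) ^ (l + 1) * ∑ i ∈ range (n + 1), (a i : ℝ) / (b : ℝ) ^ (i + 1)⌋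
            = (a 0 : ℤ) * (b : ℤ) ^ l
              + ⌊(b : ℝ) ^ l * ∑ i ∈ range n, (a (i + 1) : ℝ) / (b : ℝ) ^ (i + 1)⌋ ∧
          ⌊(b : ℝ) ^ l * ∑ i ∈ range n, (a (i + 1) : ℝ) / (b : ℝ) ^ (i + 1)⌋
            ∈ Set.Ico 0 ((b : ℤ) ^ l) := by
        intro a ha
        obtain ⟨h0, h1⟩ := sum_range_div_pow_mem_Ico hb (fun i => ha (i + 1)) n
        have hpow : (0 : ℝ) < (b : ℝ) ^ l := by positivity
        refine ⟨?_, Int.floor_nonneg.mpr (by positivity), Int.floor_lt.mpr ?_⟩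
        · have hcast : (b : ℝ) ^ l * (a 0 : ℝ) = (((a 0 : ℤ) * (b : ℤ) ^ l : ℤ) : ℝ) := by
            push_cast
            ring
          rw [pow_succ, mul_assoc, mul_sum_range_succ_div_pow hbR, mul_add, hcast,
            Int.floor_intCast_add]
        · push_cast
          nlinarith
      obtain ⟨e, he⟩ := hsplit a ha
      obtain ⟨e', he'⟩ := hsplit a' ha'
      rw [e, e', Int.mul_add_eq_mul_add_iff he he', Nat.succ_min_succ, Nat.forall_lt_succ_left,
        ih (fun i => ha (i + 1)) (fun i => ha' (i + 1))]
      simp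

theorem sum_min_ite_succ_eq {ι : Type*} [DecidableEq ι] {u v : Finset ι} {k : ι → ℕ} {n : ℕ}
    (hv : v ⊆ {j ∈ u | k j < n}) :
    ∑ j ∈ u, min (if j ∈ v then k j + 1 else k j) n = ∑ j ∈ u, min (k j) n + #v := by
  have hv' : #v = ∑ j ∈ u, if j ∈ v then 1 else 0 := by
    rw [sum_boole, Nat.cast_id, filter_mem_eq_inter,
      inter_eq_right.mpr (hv.trans (filter_subset _ _))]
  rw [hv', ← sum_add_distrib]
  refine sum_congr rfl fun j _ => ?_
  split_ifs with h
  · have := (mem_filter.mp (hv h)).2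
    omega
  · rfl

section LinearAlgebra

open Matrix

variable {F : Type*} [Field F] {ι κ : Type*} [Fintype κ]

theorem Matrix.finrank_ker_mulVecLin (M : Matrix ι κ F) :
    Module.finrank F (LinearMap.ker M.mulVecLin) = Fintype.card κ - M.rank := by
  have := LinearMap.finrank_range_add_finrank_ker M.mulVecLin
  rw [Module.finrank_fintype_fun_eq_card] at this
  rw [Matrix.rank]
  omega

theorem Matrix.mulVec_injective_of_rank_eq (M : Matrix ι κ F) (hM : M.rank = Fintype.card κ) :
    Function.Injective M.mulVec := by
  have : LinearMap.ker M.mulVecLin = ⊥ :=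
    Submodule.finrank_eq_zero.mp (by rw [M.finrank_ker_mulVecLin, hM, Nat.sub_self])
  exact LinearMap.ker_eq_bot.mp this

open scoped Classical in
theorem Matrix.card_filter_mulVec_eq [Fintype F] [Fintype ι] [DecidableEq κ] (M : Matrix ι κ F)
    (y₀ : κ → F) :
    #{y | M *ᵥ y = M *ᵥ y₀} = Fintype.card F ^ (Fintype.card κ - M.rank) := by
  rw [← M.finrank_ker_mulVecLin, ← Module.card_eq_pow_finrank, ← Fintype.card_coe]
  refine Fintype.card_congr ((Equiv.subRight y₀).subtypeEquiv fun y => ?_)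
  simp [Matrix.mulVec_sub, sub_eq_zero]

end LinearAlgebra

theorem Finset.exists_le_sum_eq {ι : Type*} [DecidableEq ι] (u : Finset ι) (g : ι → ℕ)
    {M : ℕ} (hM : M ≤ ∑ j ∈ u, g j) : ∃ g' ≤ g, ∑ j ∈ u, g' j = M := by
  induction u using Finset.induction_on generalizing M with
  | empty => exact ⟨0, fun _ => Nat.zero_le _, by simp_all⟩
  | insert a u ha ih =>
    rw [sum_insert ha] at hM
    have hsum : ∀ g' : ι → ℕ, ∀ c, ∑ j ∈ insert a u, Function.update g' a c j
        = c + ∑ j ∈ u, g' j := fun g' c => by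
      rw [sum_insert ha, Function.update_self]
      congr 1
      exact sum_congr rfl fun j hj => Function.update_of_ne (ne_of_mem_of_not_mem hj ha) _ _
    by_cases hMu : M ≤ ∑ j ∈ u, g j
    · obtain ⟨g', hg', hg'M⟩ := ih hMu
      refine ⟨Function.update g' a 0, fun j => ?_, by rw [hsum, hg'M, zero_add]⟩
      rcases eq_or_ne j a with rfl | hj
      · simp
      · simpa [hj] using hg' j
    · refine ⟨Function.update g a (M - ∑ j ∈ u, g j), fun j => ?_, by rw [hsum]; omega⟩
      rcases eq_or_ne j a with rfl | hj
      · simp only [Function.update_self]; omega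
      · simp [hj]

section DigitalNet

open Matrix

variable {F : Type} [Field F] [Fintype F] {s m : ℕ}

theorem Cuk_mulVec_eq_iff (C : Fin s → ℕ → Fin m → F) (n : ℕ) (u : Finset (Fin s))
    (l : Fin s → ℕ) (y y' : Fin m → F) :
    Cuk C n u l *ᵥ y = Cuk C n u l *ᵥ y'
      ↔ ∀ j ∈ u, ∀ t < min (l j) n, C j t ⬝ᵥ y = C j t ⬝ᵥ y' := by
  rw [funext_iff, Sigma.forall]
  refine forall_congr' fun j => ?_
  by_cases hj : j ∈ u
  · simp [hj, Fin.forall_iff, Matrix.mulVec, Cuk]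
  · exact iff_of_true (fun t => absurd t.2 (by simp [hj])) (fun h => absurd h hj)

theorem card_Cuk_rows (n : ℕ) (u : Finset (Fin s)) (l : Fin s → ℕ) :
    Fintype.card ((j : Fin s) × Fin (min (if j ∈ u then l j else 0) n))
      = ∑ j ∈ u, min (l j) n := by
  rw [Fintype.card_sigma, ← univ_inter u, ← sum_ite_mem]
  refine sum_congr rfl fun j _ => ?_
  simp only [mem_inter, mem_univ, true_and]
  split_ifs <;> simp

variable {C : Fin s → ℕ → Fin m → F} {n : ℕ}

theorem IsDigitalTNet.rank_Cuk (hnet : IsDigitalTNet C n 0) (u : Finset (Fin s))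
    (l : Fin s → ℕ) : (Cuk C n u l).rank = min (∑ j ∈ u, min (l j) n) m := by
  refine le_antisymm (le_min ((Matrix.rank_le_card_height _).trans (card_Cuk_rows n u l).le)
    ((Matrix.rank_le_card_width _).trans_eq (Fintype.card_fin m))) ?_
  obtain ⟨g, hg, hsum⟩ := u.exists_le_sum_eq (fun j => min (l j) n) (min_le_left _ m)
  rw [← hsum, ← hnet u g (by rw [hsum, add_zero]; exact min_le_right _ _)]
  have hle : ∀ j, min (if j ∈ u then g j else 0) n ≤ min (if j ∈ u then l j else 0) n :=
    fun j => by have := hg j; dsimp only at this; split_ifs <;> omega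
  have hsub : Cuk C n u g = (Cuk C n u l).submatrix (fun p => ⟨p.1, p.2.castLE (hle p.1)⟩) id :=
    rfl
  rw [hsub]
  exact Matrix.rank_submatrix_le _ _ _

theorem IsDigitalTNet.eq_zero_of_dotProduct_eq_zero (hnet : IsDigitalTNet C n 0)
    {u : Finset (Fin s)} {l : Fin s → ℕ} (hsum : ∑ j ∈ u, l j = m) {y : Fin m → F}
    (hy : ∀ j ∈ u, ∀ i < l j, C j i ⬝ᵥ y = 0) : y = 0 := by
  have hrank : (Cuk C n u l).rank = Fintype.card (Fin m) := by
    rw [hnet u l (by omega), hsum, Fintype.card_fin]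
  refine (Cuk C n u l).mulVec_injective_of_rank_eq hrank ?_
  exact (Cuk_mulVec_eq_iff C n u l y 0).mpr fun j hj t ht => by
    rw [dotProduct_zero]
    exact hy j hj t (by omega)

theorem IsDigitalTNet.cols_le_rows (hnet : IsDigitalTNet C n 0) (j : Fin s) : m ≤ n := by
  have h := hnet.rank_Cuk {j} fun _ => m
  rw [hnet {j} (fun _ => m) (by simp)] at h
  simp at h
  omega

theorem IsDigitalTNet.exists_dotProduct_eq (hnet : IsDigitalTNet C n 0) (j₀ : Fin s)
    (w : ℕ → F) : ∃ y : Fin m → F, ∀ i < m, C j₀ i ⬝ᵥ y = w i := by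
  let A : Matrix (Fin m) (Fin m) F := Matrix.of fun i c => C j₀ i c
  have hinj : Function.Injective A.mulVec := fun y y' h => by
    refine sub_eq_zero.mp (hnet.eq_zero_of_dotProduct_eq_zero (u := {j₀}) (l := fun _ => m)
      (by simp) fun j hj i hi => ?_)
    rw [mem_singleton.mp hj, dotProduct_sub, sub_eq_zero]
    exact congrFun h ⟨i, hi⟩
  obtain ⟨y, hy⟩ := mulVec_surjective_iff_isUnit.mpr (mulVec_injective_iff_isUnit.mp hinj)
    fun i => w i
  exact ⟨y, fun i hi => congrFun hy ⟨i, hi⟩⟩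

theorem IsDigitalTNet.eq_zero_of_leading_rows (hnet : IsDigitalTNet C n 0) {j₀ : Fin s}
    {w : Finset (Fin s)} (hw : j₀ ∉ w) (hwm : #w ≤ m) {y : Fin m → F}
    (h₀ : ∀ i < m - #w, C j₀ i ⬝ᵥ y = 0) (h₁ : ∀ j ∈ w, C j 0 ⬝ᵥ y = 0) :
    y = 0 := by
  refine hnet.eq_zero_of_dotProduct_eq_zero (u := insert j₀ w)
    (l := fun j => if j = j₀ then m - #w else 1) ?_ fun j hj i hi => ?_
  · rw [sum_insert hw, if_pos rfl, sum_congr rfl fun j hj => if_neg (ne_of_mem_of_not_mem hj hw),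
      sum_const, smul_eq_mul, mul_one]
    omega
  · rcases mem_insert.mp hj with rfl | hj
    · exact h₀ i (by simpa using hi)
    · rw [if_neg (ne_of_mem_of_not_mem hj hw)] at hi
      obtain rfl : i = 0 := by omega
      exact h₁ j hj

theorem IsDigitalTNet.dotProduct_ne_zero_of_dual (hnet : IsDigitalTNet C n 0) (hm : 1 ≤ m)
    {j₀ j : Fin s} (hj : j ≠ j₀) {d₁ : Fin m → F}
    (hd₁ : ∀ i < m, C j₀ i ⬝ᵥ d₁ = if i = m - 1 then 1 else 0) : C j 0 ⬝ᵥ d₁ ≠ 0 := by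
  intro h
  have hzero : d₁ = 0 := hnet.eq_zero_of_leading_rows (w := {j}) (by simpa using hj.symm)
    (by simp; omega) (fun i hi => by rw [hd₁ i (by omega), if_neg (by simp at hi; omega)])
    (by simpa using h)
  have := hd₁ (m - 1) (by omega)
  simp [hzero] at this

/-- On the plane spanned by the dual pair `d₁, d₂`, the first rows of any two coordinates other
than `j₀` are independent, so their slopes are pairwise distinct. -/
theorem IsDigitalTNet.injOn_slope (hnet : IsDigitalTNet C n 0) (hm : 2 ≤ m) {j₀ : Fin s}
    {d₁ d₂ : Fin m → F} (hd₁ : ∀ i < m, C j₀ i ⬝ᵥ d₁ = if i = m - 1 then 1 else 0)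
    (hd₂ : ∀ i < m, C j₀ i ⬝ᵥ d₂ = if i = m - 2 then 1 else 0) :
    Set.InjOn (fun j => (C j 0 ⬝ᵥ d₂) / (C j 0 ⬝ᵥ d₁)) (univ.erase j₀ : Finset (Fin s)) := by
  intro j hj j' hj' hslope
  by_contra hne
  replace hj : j ≠ j₀ := by simpa using hj
  replace hj' : j' ≠ j₀ := by simpa using hj'
  have hd₁_ne := hnet.dotProduct_ne_zero_of_dual (by omega) hj hd₁
  rw [div_eq_div_iff hd₁_ne (hnet.dotProduct_ne_zero_of_dual (by omega) hj' hd₁)] at hslope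
  set y := (C j 0 ⬝ᵥ d₁) • d₂ - (C j 0 ⬝ᵥ d₂) • d₁
  have hzero : y = 0 := by
    refine hnet.eq_zero_of_leading_rows (j₀ := j₀) (w := {j, j'})
      (by simp [Ne.symm hj, Ne.symm hj']) (by rw [card_pair hne]; omega) (fun i hi => ?_)
      fun j'' hj'' => ?_
    · rw [card_pair hne] at hi
      simp only [y, dotProduct_sub, dotProduct_smul, hd₁ i (by omega), hd₂ i (by omega),
        if_neg (show i ≠ m - 1 by omega), if_neg (show i ≠ m - 2 by omega), smul_eq_mul,
        mul_zero, sub_self]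
    · rcases mem_insert.mp hj'' with rfl | hj''
      · simp only [y, dotProduct_sub, dotProduct_smul, smul_eq_mul]
        ring
      · rw [mem_singleton.mp hj'']
        simp only [y, dotProduct_sub, dotProduct_smul, smul_eq_mul]
        linear_combination -hslope
  have hrow : C j₀ (m - 2) ⬝ᵥ y = C j 0 ⬝ᵥ d₁ := by
    simp only [y, dotProduct_sub, dotProduct_smul, hd₁ (m - 2) (by omega),
      hd₂ (m - 2) (by omega), if_true, if_neg (show m - 2 ≠ m - 1 by omega), smul_eq_mul,
      mul_one, mul_zero, sub_zero]
  exact hd₁_ne (by rw [← hrow, hzero, dotProduct_zero])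

theorem IsDigitalTNet.le_card_add_one (hnet : IsDigitalTNet C n 0) (hm : 2 ≤ m) :
    s ≤ Fintype.card F + 1 := by
  rcases Nat.eq_zero_or_pos s with rfl | hs
  · omega
  obtain ⟨d₁, hd₁⟩ := hnet.exists_dotProduct_eq ⟨0, hs⟩ fun i => if i = m - 1 then 1 else 0
  obtain ⟨d₂, hd₂⟩ := hnet.exists_dotProduct_eq ⟨0, hs⟩ fun i => if i = m - 2 then 1 else 0
  have := card_le_card_of_injOn _ (fun _ _ => mem_univ _) (hnet.injOn_slope hm hd₁ hd₂)
  rw [card_erase_of_mem (mem_univ _), card_univ, card_univ, Fintype.card_fin] at this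
  omega

end DigitalNet

section Gain

open Matrix

variable {F : Type} [Field F] [Fintype F] {s m : ℕ} (φ : Fin (Fintype.card F) ≃ F)

def netCoeffEquiv : Fin (Fintype.card F ^ m) ≃ (Fin m → F) :=
  finFunctionFinEquiv.symm.trans (Equiv.piCongrRight fun _ => φ)

theorem netCoeffEquiv_apply (h : Fin (Fintype.card F ^ m)) (c : Fin m) :
    netCoeffEquiv φ h c = toF φ (ndigit (Fintype.card F) h c) := by
  simp only [netCoeffEquiv, Equiv.trans_apply, Equiv.piCongrRight_apply, toF, ndigit]
  congr 1
  ext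
  simp

theorem fromF_injective : Function.Injective (fromF φ) :=
  Fin.val_injective.comp φ.symm.injective

theorem fromF_lt (x : F) : fromF φ x < Fintype.card F :=
  (φ.symm x).isLt

variable (C : Fin s → ℕ → Fin m → F) (n : ℕ)

theorem floor_pow_mul_dnet_eq_iff (h h' : Fin (Fintype.card F ^ m)) (j : Fin s) (l : ℕ) :
    ⌊(Fintype.card F : ℝ) ^ l * dnet φ C n h j⌋
        = ⌊(Fintype.card F : ℝ) ^ l * dnet φ C n h' j⌋ ↔
      ∀ t < min l n, C j t ⬝ᵥ netCoeffEquiv φ h = C j t ⬝ᵥ netCoeffEquiv φ h' := by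
  have hdnet : ∀ h : Fin (Fintype.card F ^ m), dnet φ C n h j = ∑ i ∈ range n,
      (fromF φ (C j i ⬝ᵥ netCoeffEquiv φ h) : ℝ) / (Fintype.card F : ℝ) ^ (i + 1) :=
    fun h => by simp only [dnet, dotProduct, netCoeffEquiv_apply]
  rw [hdnet, hdnet, floor_pow_mul_sum_div_pow_eq_iff Fintype.card_pos
    (fun _ => fromF_lt φ _) (fun _ => fromF_lt φ _)]
  simp only [(fromF_injective φ).eq_iff]

open scoped Classical in
theorem card_filter_floor_pow_mul_dnet_eq (u : Finset (Fin s)) (l : Fin s → ℕ)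
    (h : Fin (Fintype.card F ^ m)) :
    #{h' : Fin (Fintype.card F ^ m) |
        ∀ j ∈ u, ⌊(Fintype.card F : ℝ) ^ l j * dnet φ C n h j⌋
          = ⌊(Fintype.card F : ℝ) ^ l j * dnet φ C n h' j⌋}
      = Fintype.card F ^ (m - (Cuk C n u l).rank) := by
  calc _ = #{y : Fin m → F | Cuk C n u l *ᵥ y = Cuk C n u l *ᵥ netCoeffEquiv φ h} :=
        card_equiv (netCoeffEquiv φ) fun h' => by
          simp only [mem_filter, mem_univ, true_and, Cuk_mulVec_eq_iff, floor_pow_mul_dnet_eq_iff]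
          exact forall₂_congr fun j _ => forall₂_congr fun t _ => eq_comm
    _ = _ := by rw [Matrix.card_filter_mulVec_eq, Fintype.card_fin]

variable {C n}

theorem IsDigitalTNet.sum_prod_boole_floor_eq (hnet : IsDigitalTNet C n 0) (u : Finset (Fin s))
    (l : Fin s → ℕ) (h : Fin (Fintype.card F ^ m)) :
    ∑ h' : Fin (Fintype.card F ^ m), ∏ j ∈ u,
        (if ⌊(Fintype.card F : ℝ) ^ l j * dnet φ C n h j⌋
          = ⌊(Fintype.card F : ℝ) ^ l j * dnet φ C n h' j⌋ then (1 : ℝ) else 0)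
      = (Fintype.card F : ℝ) ^ (m - ∑ j ∈ u, min (l j) n) := by
  classical
  have hcard := card_filter_floor_pow_mul_dnet_eq φ C n u l h
  rw [hnet.rank_Cuk, show m - min (∑ j ∈ u, min (l j) n) m = m - ∑ j ∈ u, min (l j) n by omega]
    at hcard
  simp only [prod_boole]
  convert congrArg (Nat.cast : ℕ → ℝ) hcard using 1
  · -- the two filters differ only in their decidability instances
    rw [natCast_card_filter]
    congr!
  · push_cast
    rfl


theorem gain_dnet_eq (hnet : IsDigitalTNet C n 0) (u : Finset (Fin s)) (k : Fin s → ℕ) :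
    gain (Fintype.card F) (Fintype.card F ^ m) (fun i j => dnet φ C n (i : ℕ) j) u k
      = (Δ_[1])^[#{j ∈ u | k j < n}]
          (fun w : ℕ => (Fintype.card F : ℝ) ^ max w (m - ∑ j ∈ u, min (k j) n)) 0
        / ((Fintype.card F : ℝ) - 1) ^ #{j ∈ u | k j < n} := by
  classical
  set u₀ := {j ∈ u | k j < n}
  set ρ := ∑ j ∈ u, min (k j) n
  have hb : (Fintype.card F : ℝ) - 1 ≠ 0 := by
    have : (2 : ℝ) ≤ Fintype.card F := by exact_mod_cast Fintype.one_lt_card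
    linarith
  have hu₀ : u₀ ⊆ u := filter_subset _ _
  let S : Fin (Fintype.card F ^ m) → Fin s → ℕ → Fin (Fintype.card F ^ m) → ℝ :=
    fun i j l i' => if ⌊(Fintype.card F : ℝ) ^ l * dnet φ C n i j⌋
      = ⌊(Fintype.card F : ℝ) ^ l * dnet φ C n i' j⌋ then 1 else 0
  have hS : ∀ i i', ∀ j ∈ u \ u₀, S i j (k j + 1) i' = S i j (k j) i' := by
    intro i i' j hj
    have : n ≤ k j := by
      simp only [u₀, mem_sdiff, mem_filter, not_and, not_lt] at hj
      exact hj.2 hj.1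
    simp only [S, floor_pow_mul_dnet_eq_iff, show min (k j + 1) n = min (k j) n by omega]
  have hcount : ∀ i, ∀ v ∈ u₀.powerset,
      ∑ i', ∏ j ∈ u, (if j ∈ v then S i j (k j + 1) i' else S i j (k j) i')
        = (Fintype.card F : ℝ) ^ (m - ρ - #v) := by
    intro i v hv
    have hite : ∀ i' j, (if j ∈ v then S i j (k j + 1) i' else S i j (k j) i')
        = S i j (if j ∈ v then k j + 1 else k j) i' := fun i' j => by split_ifs <;> rfl
    simp only [hite, S]
    rw [hnet.sum_prod_boole_floor_eq φ u _ i, sum_min_ite_succ_eq (mem_powerset.mp hv),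
      Nat.sub_sub]
  calc _ = 1 / ((Fintype.card F ^ m : ℕ) : ℝ) * ∑ i, ∑ i', ∏ j ∈ u,
        ((Fintype.card F : ℝ) * S i j (k j + 1) i' - S i j (k j) i')
          / ((Fintype.card F : ℝ) - 1) := rfl
    _ = 1 / ((Fintype.card F ^ m : ℕ) : ℝ) * ∑ i : Fin (Fintype.card F ^ m),
        (∑ v ∈ u₀.powerset, (Fintype.card F : ℝ) ^ #v * (-1) ^ #(u₀ \ v)
          * (Fintype.card F : ℝ) ^ (m - ρ - #v)) / ((Fintype.card F : ℝ) - 1) ^ #u₀ := by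
      simp_rw [prod_mul_sub_div_eq_sum_powerset hu₀ hb _ _ (hS _ _)]
      refine congrArg _ (sum_congr rfl fun i _ => ?_)
      rw [← sum_div, sum_comm]
      exact congrArg (· / _) (sum_congr rfl fun v hv => by rw [← mul_sum, hcount i v hv])
    _ = _ := by
      rw [sum_powerset_eq_fwdDiff_iter, sum_const, card_univ, Fintype.card_fin, nsmul_eq_mul]
      field_simp

end Gain

theorem stmt13_general {F : Type} [Field F] [Fintype F] {s m : ℕ}
    (φ : Fin (Fintype.card F) ≃ F)
    (C : Fin s → ℕ → Fin m → F) (n : ℕ)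
    (hnet : IsDigitalTNet C n 0)
    (u : Finset (Fin s)) (hu : u.Nonempty) (k : Fin s → ℕ) :
    gain (Fintype.card F) (Fintype.card F ^ m) (fun i j => dnet φ C n (i : ℕ) j) u k ≤
      ((Fintype.card F : ℝ) / ((Fintype.card F : ℝ) - 1)) ^ (s - 1) := by
  have hb : 2 ≤ Fintype.card F := Fintype.one_lt_card
  have hratio : (1 : ℝ) ≤ Fintype.card F / ((Fintype.card F : ℝ) - 1) := by
    have : (2 : ℝ) ≤ Fintype.card F := by exact_mod_cast hb
    rw [le_div_iff₀ (by linarith)]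
    linarith
  rw [gain_dnet_eq φ hnet u k]
  rcases Nat.eq_zero_or_pos #{j ∈ u | k j < n} with hr | hr
  · obtain ⟨j, hj⟩ := hu
    have hkj : n ≤ k j := by
      have := filter_eq_empty_iff.mp (card_eq_zero.mp hr) hj
      omega
    have hd : m - ∑ j ∈ u, min (k j) n = 0 := by
      have := single_le_sum (fun j _ => Nat.zero_le (min (k j) n)) hj
      have := hnet.cols_le_rows j
      omega
    rw [hr, hd]
    simpa using one_le_pow₀ hratio
  · have hrs : #{j ∈ u | k j < n} ≤ s := (card_le_univ _).trans_eq (Fintype.card_fin s)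
    refine (fwdDiff_iter_pow_max_div_le hb hr ?_).trans (pow_le_pow_right₀ hratio (by omega))
    by_contra! h
    have := hnet.le_card_add_one (by omega)
    omega

/-- for a digital `(0,m,s)`-net in base `b`, every gain coefficient
satisfies `Γ_{u,k} ≤ (b/(b-1))^{s-1}`. -/
theorem stmt13 {F : Type} [Field F] [Fintype F] {s m : ℕ}
    (φ : Fin (Fintype.card F) ≃ F) (hφ : φ ⟨0, Fintype.card_pos⟩ = 0)
    (C : Fin s → ℕ → Fin m → F) (n : ℕ) (hn : m ≤ n)
    (hnet : IsDigitalTNet C n 0)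
    (u : Finset (Fin s)) (hu : u.Nonempty) (k : Fin s → ℕ) :
    gain (Fintype.card F) (Fintype.card F ^ m) (fun i j => dnet φ C n (i : ℕ) j) u k ≤
      ((Fintype.card F : ℝ) / ((Fintype.card F : ℝ) - 1)) ^ (s - 1) :=
  stmt13_general φ C n hnet u hu k
end
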